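/- Let p be an odd prime, let m be an integer not divisible by p, and suppose t ∈ ℤ/p²ℤ satisfies t² = 1 − 64/m (where 1/m denotes the inverse of the image of m in ℤ/p²ℤ). Then in ℤ/p²ℤ: Σ_{k=0}^{(p−1)/2} C(2k,k)³·m^{−k} = P_{(p−1)/2}(t)². -/

import Mathlib

/-- The Legendre polynomial `P_n` evaluated at `x`, in any commutative ring
(meaningful when 2 is invertible):
`P_n(x) = 2^{-n} * Σ_{k=0}^{⌊n/2⌋} (-1)^k C(n,k) C(2n-2k,n) x^{n-2k}`. -/
noncomputable def legP {R : Type*} [CommRing R] (n : ℕ) (x : R) : R :=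
  Ring.inverse (2 : R) ^ n *
    ∑ k ∈ Finset.range (n / 2 + 1),
      (-1 : R) ^ k * (n.choose k : R) * (((2 * n - 2 * k).choose n : ℕ) : R) * x ^ (n - 2 * k)

/-!
Put `w = (t² - 1)/4`. Whenever `2` and `n!` are invertible,
`P_n(t)² = ∑_k C(n+k, 2k) C(2k, k)² w^k`: both sides are carried through the three-term
recurrence `(j+2) P_{j+2} = (2j+3) t P_{j+1} - (j+1) P_j` by induction, together with
`(j+1) P_j P_{j+1} = t ∑_k (j+k+1) C(j+k, 2k) C(2k, k)² w^k`.
For `p = 2n+1` one has `4 (n+k+1)(n-k) = p² - (2k+1)²`, so modulo `p²` the ratio of consecutive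
`C(n+k, 2k)` is that of consecutive `C(2k, k) / (-16)^k`. Hence `C(n+k, 2k) ≡ C(2k, k) / (-16)^k`,
and `w = -16/m` turns the square of `P_n(t)` into `∑_k C(2k, k)³ m^{-k}`.
-/

open Finset

theorem sum_range_eq_sum_range_of_eq_zero {M : Type*} [AddCommMonoid M] {f : ℕ → M} {m n : ℕ}
    (hmn : m ≤ n) (hf : ∀ k, m ≤ k → f k = 0) : ∑ k ∈ range m, f k = ∑ k ∈ range n, f k :=
  sum_subset (range_subset_range.2 hmn) fun k _ hk => hf k (by simpa using hk)

section Binomial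

variable {R : Type*} [CommRing R]

theorem cast_choose_succ_right_mul (n k : ℕ) :
    (n.choose (k + 1) : R) * (k + 1) = n.choose k * (n - k) := by
  rcases le_or_gt k n with hkn | hnk
  · have h := congrArg (Nat.cast : ℕ → R) (Nat.choose_succ_right_eq n k)
    push_cast [Nat.cast_sub hkn] at h
    exact h
  · simp [Nat.choose_eq_zero_of_lt hnk, Nat.choose_eq_zero_of_lt (hnk.trans (Nat.lt_succ_self k))]

theorem cast_choose_mul_succ (n k : ℕ) :
    (n.choose k : R) * (n + 1) = (n + 1).choose k * (n + 1 - k) := by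
  rcases le_or_gt k (n + 1) with hkn | hnk
  · have h := congrArg (Nat.cast : ℕ → R) (Nat.choose_mul_succ_eq n k)
    push_cast [Nat.cast_sub hkn] at h
    exact h
  · simp [Nat.choose_eq_zero_of_lt hnk, Nat.choose_eq_zero_of_lt ((Nat.lt_succ_self n).trans hnk)]

theorem cast_choose_add_one_two_mul_add_two (n m : ℕ) :
    (2 * m + 1) * (2 * m + 2) * ((n + m + 1).choose (2 * m + 2) : R)
      = (n + m + 1) * (n - m) * (n + m).choose (2 * m) := by
  have h₁ := congrArg (Nat.cast : ℕ → R) (Nat.add_one_mul_choose_eq (n + m) (2 * m + 1))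
  have h₂ := cast_choose_succ_right_mul (R := R) (n + m) (2 * m)
  push_cast at h₁ h₂
  linear_combination (-(2 * (m : R) + 1)) * h₁ + ((n : R) + m + 1) * h₂

end Binomial

/-- Up to the sign `(-1)^k`, the coefficient of `x^(n-2k)` in `2^n P_n(x)`. -/
def legendreCoeff (n k : ℕ) : ℕ := Nat.centralBinom (n - k) * (n - k).choose k

theorem legendreCoeff_eq_zero {n k : ℕ} (h : n < 2 * k) : legendreCoeff n k = 0 := by
  rw [legendreCoeff, Nat.choose_eq_zero_of_lt (by omega), mul_zero]

theorem choose_mul_choose_eq_legendreCoeff (n k : ℕ) :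
    n.choose k * (2 * n - 2 * k).choose n = legendreCoeff n k := by
  rcases le_or_gt k n with hkn | hnk
  · have h := Nat.choose_mul (n := 2 * n - 2 * k) (k := n) (s := n - k) (Nat.sub_le n k)
    rw [Nat.choose_symm hkn, show 2 * n - 2 * k - (n - k) = n - k by omega,
      show n - (n - k) = k by omega, show 2 * n - 2 * k = 2 * (n - k) by omega] at h
    rw [legendreCoeff, Nat.centralBinom_eq_two_mul_choose, mul_comm,
      show 2 * n - 2 * k = 2 * (n - k) by omega, h]
  · rw [Nat.choose_eq_zero_of_lt hnk, zero_mul, legendreCoeff_eq_zero (by omega)]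

theorem add_two_mul_legendreCoeff_zero (j : ℕ) :
    (j + 2) * legendreCoeff (j + 2) 0 = 2 * (2 * j + 3) * legendreCoeff (j + 1) 0 := by
  simpa [legendreCoeff, add_assoc, mul_add] using Nat.succ_mul_centralBinom_succ (j + 1)

theorem add_two_mul_legendreCoeff_succ (j i : ℕ) :
    (j + 2) * legendreCoeff (j + 2) (i + 1)
      = 2 * (2 * j + 3) * legendreCoeff (j + 1) (i + 1) + 4 * (j + 1) * legendreCoeff j i := by
  rcases le_or_gt i j with hij | hji
  · obtain ⟨r, rfl⟩ := Nat.exists_eq_add_of_le hij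
    simp only [legendreCoeff, show i + r + 2 - (i + 1) = r + 1 by omega,
      show i + r + 1 - (i + 1) = r by omega, Nat.add_sub_cancel_left]
    have hb := congrArg (Nat.cast : ℕ → ℤ) (Nat.succ_mul_centralBinom_succ r)
    have hc := cast_choose_succ_right_mul (R := ℤ) r i
    push_cast at hb
    rw [← Nat.cast_inj (R := ℤ)]
    apply mul_left_cancel₀ (show ((r : ℤ) + 1) ≠ 0 by positivity)
    rw [Nat.choose_succ_succ]
    push_cast
    linear_combination (((i : ℤ) + r + 2) * ((r.choose i : ℤ) + r.choose (i + 1))) * hb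
      - 2 * (Nat.centralBinom r : ℤ) * hc
  · simp [legendreCoeff_eq_zero (show j + 2 < 2 * (i + 1) by omega),
      legendreCoeff_eq_zero (show j + 1 < 2 * (i + 1) by omega),
      legendreCoeff_eq_zero (show j < 2 * i by omega)]

def legendreSqCoeff (n m : ℕ) : ℕ := (n + m).choose (2 * m) * Nat.centralBinom m ^ 2

theorem legendreSqCoeff_eq_zero {n m : ℕ} (h : n < m) : legendreSqCoeff n m = 0 := by
  rw [legendreSqCoeff, Nat.choose_eq_zero_of_lt (by omega), zero_mul]

@[simp]
theorem legendreSqCoeff_zero (n : ℕ) : legendreSqCoeff n 0 = 1 := by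
  simp [legendreSqCoeff]

theorem legendreSqCoeff_succ_rec (j μ : ℕ) :
    ((j : ℤ) + 2) ^ 2 * legendreSqCoeff (j + 2) (μ + 1)
        - (2 * j + 3) ^ 2 * legendreSqCoeff (j + 1) (μ + 1)
        + (2 * (2 * j + 3) * (j + μ + 2) - (j + 1) ^ 2) * legendreSqCoeff j (μ + 1)
      = 4 * ((2 * j + 3) ^ 2 * legendreSqCoeff (j + 1) μ
        - 2 * (2 * j + 3) * (j + μ + 1) * legendreSqCoeff j μ) := by
  have hD := congrArg (Nat.cast : ℕ → ℚ) (Nat.succ_mul_centralBinom_succ μ)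
  have hA₀ := cast_choose_add_one_two_mul_add_two (R := ℚ) j μ
  have hA₁ := cast_choose_add_one_two_mul_add_two (R := ℚ) (j + 1) μ
  have hA₂ := cast_choose_add_one_two_mul_add_two (R := ℚ) (j + 2) μ
  have hX := cast_choose_mul_succ (R := ℚ) (j + μ) (2 * μ)
  have hY := cast_choose_mul_succ (R := ℚ) (j + μ + 1) (2 * μ)
  simp only [legendreSqCoeff, show j + 2 + (μ + 1) = j + μ + 3 by ring,
    show j + 1 + (μ + 1) = j + μ + 2 by ring, show j + (μ + 1) = j + μ + 1 by ring,
    show 2 * (μ + 1) = 2 * μ + 2 by ring, show j + 1 + μ = j + μ + 1 by ring,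
    show j + 2 + μ = j + μ + 2 by ring] at *
  qify
  push_cast at *
  generalize (Nat.centralBinom μ : ℚ) = E at *
  generalize (Nat.centralBinom (μ + 1) : ℚ) = D at *
  generalize (((j + μ).choose (2 * μ) : ℕ) : ℚ) = X at *
  generalize (((j + μ + 1).choose (2 * μ) : ℕ) : ℚ) = Y at *
  generalize (((j + μ + 2).choose (2 * μ) : ℕ) : ℚ) = Z at *
  generalize (((j + μ + 1).choose (2 * μ + 2) : ℕ) : ℚ) = A₀ at *
  generalize (((j + μ + 2).choose (2 * μ + 2) : ℕ) : ℚ) = A₁ at *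
  generalize (((j + μ + 3).choose (2 * μ + 2) : ℕ) : ℚ) = A₂ at *
  -- All binomials are rational multiples of `Y` or `E`; `Z` enters only through `(j+2-μ) Z`,
  -- so no case split on `μ` versus `j` is needed.
  have hK : (2 * (μ : ℚ) + 1) * (2 * μ + 2) ≠ 0 := by positivity
  have hA₂' : A₂ = (j + μ + 3) * (j + μ + 2) * Y / ((2 * μ + 1) * (2 * μ + 2)) := by
    rw [eq_div_iff hK]; linear_combination hA₂ - ((j : ℚ) + μ + 3) * hY
  have hA₁' : A₁ = (j + μ + 2) * (j + 1 - μ) * Y / ((2 * μ + 1) * (2 * μ + 2)) := by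
    rw [eq_div_iff hK]; linear_combination hA₁
  have hA₀' : A₀ = (j + μ + 1) * (j - μ) * X / ((2 * μ + 1) * (2 * μ + 2)) := by
    rw [eq_div_iff hK]; linear_combination hA₀
  have hX' : X = (j + 1 - μ) * Y / (j + μ + 1) := by
    rw [eq_div_iff (by positivity)]; linear_combination hX
  have hD' : D = 2 * (2 * μ + 1) * E / (μ + 1) := by
    rw [eq_div_iff (by positivity)]; linear_combination hD
  rw [hA₂', hA₁', hA₀', hX', hD']
  field_simp
  ring

section Legendre

variable {R : Type*} [CommRing R]

def legendreTerm (n k : ℕ) (x : R) : R := (-1) ^ k * legendreCoeff n k * x ^ (n - 2 * k)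

/-- `2^n P_n(x)`, which has integer coefficients. -/
def legendreNum (n : ℕ) (x : R) : R := ∑ k ∈ range (n / 2 + 1), legendreTerm n k x

theorem legendreNum_eq_sum_range {n N : ℕ} (x : R) (h : n / 2 < N) :
    legendreNum n x = ∑ k ∈ range N, legendreTerm n k x :=
  sum_range_eq_sum_range_of_eq_zero h fun k hk => by
    rw [legendreTerm, legendreCoeff_eq_zero (by omega), Nat.cast_zero, mul_zero, zero_mul]

theorem legP_eq_inverse_two_pow_mul (n : ℕ) (x : R) :
    legP n x = Ring.inverse 2 ^ n * legendreNum n x := by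
  rw [legP, legendreNum]
  congr 1
  refine sum_congr rfl fun k _ => ?_
  rw [legendreTerm, ← choose_mul_choose_eq_legendreCoeff]
  push_cast
  ring

theorem legendreTerm_zero_rec (x : R) (j : ℕ) :
    (j + 2) * legendreTerm (j + 2) 0 x = 2 * (2 * j + 3) * x * legendreTerm (j + 1) 0 x := by
  have hc := congrArg (Nat.cast : ℕ → R) (add_two_mul_legendreCoeff_zero j)
  push_cast at hc
  simp only [legendreTerm, pow_zero, one_mul, Nat.mul_zero, Nat.sub_zero, pow_succ]
  linear_combination (x ^ j * x * x) * hc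

theorem legendreTerm_succ_rec (x : R) (j i : ℕ) :
    (j + 2) * legendreTerm (j + 2) (i + 1) x + 4 * (j + 1) * legendreTerm j i x
      = 2 * (2 * j + 3) * x * legendreTerm (j + 1) (i + 1) x := by
  -- `x^(j+1-2(i+1))` truncates when `2i ≥ j`, but then the coefficient vanishes.
  have hx : (legendreCoeff (j + 1) (i + 1) : R) * (x * x ^ (j + 1 - 2 * (i + 1)))
      = legendreCoeff (j + 1) (i + 1) * x ^ (j - 2 * i) := by
    rcases le_or_gt (2 * i + 1) j with h | h
    · rw [show j - 2 * i = j + 1 - 2 * (i + 1) + 1 by omega, pow_succ']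
    · rw [legendreCoeff_eq_zero (by omega), Nat.cast_zero, zero_mul, zero_mul]
  have hc := congrArg (Nat.cast : ℕ → R) (add_two_mul_legendreCoeff_succ j i)
  push_cast at hc
  simp only [legendreTerm, show j + 2 - 2 * (i + 1) = j - 2 * i by omega]
  linear_combination ((-1) ^ (i + 1) * x ^ (j - 2 * i)) * hc
    - 2 * (2 * (j : R) + 3) * (-1) ^ (i + 1) * hx

theorem legendreNum_succ_rec (x : R) (j : ℕ) :
    (j + 2) * legendreNum (j + 2) x + 4 * (j + 1) * legendreNum j x
      = 2 * (2 * j + 3) * x * legendreNum (j + 1) x := by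
  have e₂ : legendreNum (j + 2) x
      = ∑ i ∈ range (j + 2), legendreTerm (j + 2) (i + 1) x + legendreTerm (j + 2) 0 x := by
    rw [legendreNum_eq_sum_range (N := j + 2 + 1) x (by omega), sum_range_succ']
  have e₁ : legendreNum (j + 1) x
      = ∑ i ∈ range (j + 2), legendreTerm (j + 1) (i + 1) x + legendreTerm (j + 1) 0 x := by
    rw [legendreNum_eq_sum_range (N := j + 2 + 1) x (by omega), sum_range_succ']
  rw [e₂, e₁, legendreNum_eq_sum_range (n := j) (N := j + 2) x (by omega), mul_add ((j : R) + 2),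
    mul_add (2 * (2 * (j : R) + 3) * x), mul_sum, mul_sum, mul_sum, ← legendreTerm_zero_rec,
    add_right_comm, ← sum_add_distrib]
  simp only [legendreTerm_succ_rec]

theorem legP_zero (x : R) : legP 0 x = 1 := by
  simp [legP]

theorem legP_one {x : R} (h2 : IsUnit (2 : R)) : legP 1 x = x := by
  simp [legP, ← mul_assoc, Ring.inverse_mul_cancel _ h2]

theorem legP_succ_succ (h2 : IsUnit (2 : R)) (x : R) (j : ℕ) :
    (j + 2) * legP (j + 2) x = (2 * j + 3) * x * legP (j + 1) x - (j + 1) * legP j x := by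
  have hu := Ring.mul_inverse_cancel (2 : R) h2
  simp only [legP_eq_inverse_two_pow_mul]
  set u := Ring.inverse (2 : R)
  linear_combination u ^ (j + 2) * legendreNum_succ_rec x j
    + ((2 * j + 3) * x * u ^ (j + 1) * legendreNum (j + 1) x
      - (j + 1) * u ^ j * legendreNum j x * (2 * u + 1)) * hu

/-- Evaluated at `w = (x² - 1)/4`, this is `P_n(x)²`. -/
def legendreSqSum (n : ℕ) (w : R) : R := ∑ m ∈ range (n + 1), (legendreSqCoeff n m : R) * w ^ m

/-- Evaluated at `w = (x² - 1)/4`, this is `(n + 1) P_n(x) P_{n+1}(x) / x`. -/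
def legendreMulSum (n : ℕ) (w : R) : R :=
  ∑ m ∈ range (n + 1), ((n : R) + m + 1) * legendreSqCoeff n m * w ^ m

theorem legendreSqSum_eq_sum_range {n N : ℕ} (w : R) (h : n < N) :
    legendreSqSum n w = ∑ m ∈ range N, (legendreSqCoeff n m : R) * w ^ m :=
  sum_range_eq_sum_range_of_eq_zero h fun m hm => by
    rw [legendreSqCoeff_eq_zero (by omega), Nat.cast_zero, zero_mul]

theorem legendreMulSum_eq_sum_range {n N : ℕ} (w : R) (h : n < N) :
    legendreMulSum n w = ∑ m ∈ range N, ((n : R) + m + 1) * legendreSqCoeff n m * w ^ m :=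
  sum_range_eq_sum_range_of_eq_zero h fun m hm => by
    rw [legendreSqCoeff_eq_zero (by omega), Nat.cast_zero, mul_zero, zero_mul]

theorem legendreMulSum_add (w : R) (j : ℕ) :
    legendreMulSum (j + 1) w + legendreMulSum j w = (2 * j + 3) * legendreSqSum (j + 1) w := by
  rw [legendreMulSum, legendreMulSum_eq_sum_range (n := j) (N := j + 1 + 1) w (by omega),
    legendreSqSum, ← sum_add_distrib, mul_sum]
  refine sum_congr rfl fun m _ => ?_
  have h := cast_choose_mul_succ (R := R) (j + m) (2 * m)
  simp only [legendreSqCoeff, show j + 1 + m = j + m + 1 by ring]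
  push_cast at h ⊢
  linear_combination ((Nat.centralBinom m : R) ^ 2 * w ^ m) * h

theorem legendreSqSum_succ_succ (w : R) (j : ℕ) :
    (j + 2) ^ 2 * legendreSqSum (j + 2) w
      = (2 * j + 3) ^ 2 * (4 * w + 1) * legendreSqSum (j + 1) w
        - 2 * (2 * j + 3) * (4 * w + 1) * legendreMulSum j w + (j + 1) ^ 2 * legendreSqSum j w := by
  set c : ℕ → R := fun m => (2 * j + 3) ^ 2 * legendreSqCoeff (j + 1) m
    - 2 * (2 * j + 3) * (j + m + 1) * legendreSqCoeff j m
  have hlow : (2 * j + 3) ^ 2 * legendreSqSum (j + 1) w - 2 * (2 * j + 3) * legendreMulSum j w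
      = ∑ m ∈ range (j + 2), c m * w ^ m := by
    rw [legendreSqSum, legendreMulSum_eq_sum_range (N := j + 2) w (by omega), mul_sum, mul_sum,
      ← sum_sub_distrib]
    exact sum_congr rfl fun m _ => by ring
  have hall : (j + 2) ^ 2 * legendreSqSum (j + 2) w - (2 * j + 3) ^ 2 * legendreSqSum (j + 1) w
        + 2 * (2 * j + 3) * legendreMulSum j w - (j + 1) ^ 2 * legendreSqSum j w
      = 4 * w * ∑ m ∈ range (j + 2), c m * w ^ m := by
    rw [legendreSqSum, legendreSqSum_eq_sum_range (n := j + 1) (N := j + 2 + 1) w (by omega),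
      legendreMulSum_eq_sum_range (N := j + 2 + 1) w (by omega),
      legendreSqSum_eq_sum_range (n := j) (N := j + 2 + 1) w (by omega)]
    simp only [mul_sum, ← sum_sub_distrib, ← sum_add_distrib]
    rw [sum_range_succ']
    simp only [legendreSqCoeff_zero, Nat.cast_one, Nat.cast_zero, pow_zero]
    refine (add_eq_left.2 (by ring)).trans (sum_congr rfl fun m _ => ?_)
    have h := congrArg (Int.cast : ℤ → R) (legendreSqCoeff_succ_rec j m)
    push_cast at h ⊢
    linear_combination w ^ (m + 1) * h
  linear_combination hall - 4 * w * hlow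

theorem legP_sq_and_mul {x w : R} (h2 : IsUnit (2 : R)) (hw : 4 * w + 1 = x ^ 2) (j : ℕ)
    (hj : IsUnit ((j + 1).factorial : R)) :
    legP j x ^ 2 = legendreSqSum j w ∧ legP (j + 1) x ^ 2 = legendreSqSum (j + 1) w
      ∧ ((j : R) + 1) * (legP j x * legP (j + 1) x) = x * legendreMulSum j w := by
  induction j with
  | zero =>
    have hS₁ : legendreSqSum 1 w = 4 * w + 1 := by
      norm_num [legendreSqSum, sum_range_succ, legendreSqCoeff, Nat.centralBinom_eq_two_mul_choose,
        add_comm, mul_comm]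
    refine ⟨by simp [legP_zero, legendreSqSum], by rw [legP_one h2, hS₁, hw], ?_⟩
    simp [legP_zero, legP_one h2, legendreMulSum]
  | succ j ih =>
    have hfac : IsUnit ((j + 1).factorial : R) :=
      isUnit_of_dvd_unit (Nat.cast_dvd_cast (Nat.factorial_dvd_factorial (by omega))) hj
    have hj2 : IsUnit ((j : R) + 2) := by
      simpa [add_assoc, one_add_one_eq_two] using
        isUnit_of_dvd_unit (Nat.cast_dvd_cast (Nat.dvd_factorial (by omega) le_rfl)) hj
    obtain ⟨hS₀, hS₁, hT₀⟩ := ih hfac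
    have hP := legP_succ_succ h2 x j
    refine ⟨hS₁, (hj2.pow 2).mul_left_cancel ?_, ?_⟩
    · linear_combination ((j + 2) * legP (j + 2) x + (2 * j + 3) * x * legP (j + 1) x
          - (j + 1) * legP j x) * hP + (2 * j + 3) ^ 2 * x ^ 2 * hS₁ - 2 * (2 * j + 3) * x * hT₀
        + (j + 1) ^ 2 * hS₀ - legendreSqSum_succ_succ w j
        - ((2 * j + 3) ^ 2 * legendreSqSum (j + 1) w - 2 * (2 * j + 3) * legendreMulSum j w) * hw
    · push_cast
      linear_combination legP (j + 1) x * hP + (2 * j + 3) * x * hS₁ - hT₀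
        - x * legendreMulSum_add w j

theorem legP_sq {x w : R} (h2 : IsUnit (2 : R)) (hw : 4 * w + 1 = x ^ 2) {n : ℕ}
    (hn : IsUnit (n.factorial : R)) : legP n x ^ 2 = legendreSqSum n w := by
  cases n with
  | zero => simp [legP_zero, legendreSqSum]
  | succ j => exact (legP_sq_and_mul h2 hw j hn).2.1

end Legendre

section Congruence

variable {R : Type*} [CommRing R]

theorem sixteen_pow_mul_choose {n : ℕ} (hn : ((2 * n + 1 : ℕ) : R) ^ 2 = 0) (m : ℕ)
    (hm : IsUnit ((2 * m).factorial : R)) :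
    16 ^ m * ((n + m).choose (2 * m) : R) = (-1) ^ m * Nat.centralBinom m := by
  induction m with
  | zero => simp
  | succ m ih =>
    have hfac : (2 * (m + 1)).factorial = (2 * m + 1) * (2 * m + 2) * (2 * m).factorial := by
      rw [show 2 * (m + 1) = 2 * m + 1 + 1 by ring, Nat.factorial_succ, Nat.factorial_succ]; ring
    rw [hfac, Nat.cast_mul, IsUnit.mul_iff] at hm
    have hK := hm.1
    push_cast at hK hn
    have h := cast_choose_add_one_two_mul_add_two (R := R) n m
    have hb := congrArg (Nat.cast : ℕ → R) (Nat.succ_mul_centralBinom_succ m)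
    push_cast at hb
    apply hK.mul_left_cancel
    rw [show n + (m + 1) = n + m + 1 by ring, show 2 * (m + 1) = 2 * m + 2 by ring]
    -- `4 (n+m+1)(n-m) = (2n+1)² - (2m+1)²`, and `(2n+1)² = 0`.
    linear_combination 16 ^ (m + 1) * h + 4 * 16 ^ m * ((n + m).choose (2 * m) : R) * hn
      - 4 * (2 * m + 1) ^ 2 * ih hm.2 + 2 * (2 * m + 1) * (-1) ^ m * hb

theorem legendreSqCoeff_mul_neg_sixteen_pow {n : ℕ} (hn : ((2 * n + 1 : ℕ) : R) ^ 2 = 0)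
    (k : ℕ) (hk : IsUnit ((2 * k).factorial : R)) (M : R) :
    (legendreSqCoeff n k : R) * (-16 * M) ^ k = (Nat.centralBinom k : R) ^ 3 * M ^ k := by
  have h := sixteen_pow_mul_choose hn k hk
  have hsign : ((-1 : R) ^ k) ^ 2 = 1 := by
    rw [← pow_mul, pow_mul', neg_one_sq, one_pow]
  rw [legendreSqCoeff, mul_pow, neg_pow]
  push_cast
  linear_combination ((Nat.centralBinom k : R) ^ 2 * M ^ k * (-1) ^ k) * h
    + (Nat.centralBinom k : R) ^ 3 * M ^ k * hsign

end Congruence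

theorem isUnit_factorial_zmod_prime_pow {p : ℕ} (hp : p.Prime) (e : ℕ) {k : ℕ} (hk : k < p) :
    IsUnit (k.factorial : ZMod (p ^ e)) :=
  (ZMod.isUnit_iff_coprime _ _).2 ((hp.coprime_factorial_of_lt hk).pow_left e).symm

theorem stmt_12_general (p : ℕ) [Fact p.Prime] (hp : p ≠ 2) (m : ℤ)
    (t : ZMod (p ^ 2)) (ht : t ^ 2 = 1 - 64 * Ring.inverse ((m : ℤ) : ZMod (p ^ 2))) :
    ∑ k ∈ Finset.range ((p - 1) / 2 + 1),
        (((2 * k).choose k : ℕ) : ZMod (p ^ 2)) ^ 3 * (Ring.inverse ((m : ℤ) : ZMod (p ^ 2))) ^ k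
      = legP ((p - 1) / 2) t ^ 2 := by
  have hprime : p.Prime := Fact.out
  obtain ⟨n, rfl⟩ := (hprime.eq_two_or_odd'.resolve_left hp).exists_bit1
  have hunit (k : ℕ) (hk : k ≤ 2 * n) : IsUnit (k.factorial : ZMod ((2 * n + 1) ^ 2)) :=
    isUnit_factorial_zmod_prime_pow hprime 2 (by omega)
  have h2 : IsUnit (2 : ZMod ((2 * n + 1) ^ 2)) := by
    have := hprime.two_le
    simpa using isUnit_of_dvd_unit (Nat.cast_dvd_cast (Nat.dvd_factorial two_pos (by omega)))
      (hunit (2 * n) le_rfl)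
  have hp0 : (((2 * n + 1 : ℕ) : ZMod ((2 * n + 1) ^ 2))) ^ 2 = 0 := by
    rw [← Nat.cast_pow, ZMod.natCast_self]
  rw [show (2 * n + 1 - 1) / 2 = n by omega,
    legP_sq h2 (w := -16 * Ring.inverse ((m : ℤ) : ZMod ((2 * n + 1) ^ 2)))
      (by linear_combination -ht) (hunit n (by omega)), legendreSqSum]
  refine sum_congr rfl fun k hk => ?_
  exact (legendreSqCoeff_mul_neg_sixteen_pow hp0 k (hunit (2 * k) (by simp at hk; omega)) _).symm

theorem stmt_12 (p : ℕ) [Fact p.Prime] (hp : p ≠ 2) (m : ℤ) (hm : ¬ (p : ℤ) ∣ m)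
    (t : ZMod (p ^ 2)) (ht : t ^ 2 = 1 - 64 * Ring.inverse ((m : ℤ) : ZMod (p ^ 2))) :
    ∑ k ∈ Finset.range ((p - 1) / 2 + 1),
        (((2 * k).choose k : ℕ) : ZMod (p ^ 2)) ^ 3 * (Ring.inverse ((m : ℤ) : ZMod (p ^ 2))) ^ k
      = legP ((p - 1) / 2) t ^ 2 :=
  stmt_12_general p hp m t ht
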